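/- The α-twisted insertion operations make {V^α_m, ∘ᵢ} a pre-Lie system; consequently, the operation f ∘ g = Σ_{i=0}^{m} (-1)^{ni} f ∘ᵢ g makes ⊕_m V^α_m a graded pre-Lie algebra: for f ∈ V^α_m, g ∈ V^α_n, h ∈ V^α_p, (f ∘ g) ∘ h - f ∘ (g ∘ h) = (-1)^{np} [ (f ∘ h) ∘ g - f ∘ (h ∘ g) ]. -/

import Mathlib

/-- Reindex a tuple along an equality of lengths. -/
def reindex {A : Type*} {p q : ℕ} (h : q = p) (a : Fin p → A) : Fin q → A :=
  fun k => a (Fin.cast h k)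

/-- `f` commutes with `α`, i.e. `α ∘ f = f ∘ α^{⊗n}` (membership condition for `Cⁿ_α`/`V^α`). -/
def IsCompat {A : Type*} (α : A → A) {n : ℕ} (f : (Fin n → A) → A) : Prop :=
  ∀ a : Fin n → A, α (f a) = f fun i => α (a i)

/-- The α-twisted Hochschild coboundary on `n`-cochains. -/
def homDelta {A : Type*} [AddCommGroup A] (μ : A → A → A) (α : A → A) (n : ℕ)
    (f : (Fin n → A) → A) : (Fin (n + 1) → A) → A := fun a =>
  μ (α^[n - 1] (a 0)) (f fun i => a i.succ)
    + ∑ i : Fin n, ((-1 : ℤ) ^ ((i : ℕ) + 1)) •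
        f (fun j => if (j : ℕ) < (i : ℕ) then α (a j.castSucc)
          else if (j : ℕ) = (i : ℕ) then μ (a j.castSucc) (a j.succ)
          else α (a j.succ))
    + ((-1 : ℤ) ^ (n + 1)) • μ (f fun i => a i.castSucc) (α^[n - 1] (a (Fin.last n)))

/-- The α-twisted insertion `f ∘ᵢ g` for `f ∈ V^α_m`, `g ∈ V^α_n`. -/
def circI {A : Type*} (α : A → A) {m n : ℕ} (i : Fin (m + 1))
    (f : (Fin (m + 1) → A) → A) (g : (Fin (n + 1) → A) → A) :
    (Fin (m + n + 1) → A) → A := fun a =>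
  f fun k => if (k : ℕ) < (i : ℕ) then α^[n] (a ⟨(k : ℕ), by omega⟩)
    else if (k : ℕ) = (i : ℕ) then g (fun l => a ⟨(i : ℕ) + (l : ℕ), by omega⟩)
    else α^[n] (a ⟨(k : ℕ) + n, by omega⟩)

/-- The α-twisted pre-Lie product `f ∘ g = Σᵢ (-1)^{ni} f ∘ᵢ g`. -/
def vcirc {A : Type*} [AddCommGroup A] (α : A → A) {m n : ℕ}
    (f : (Fin (m + 1) → A) → A) (g : (Fin (n + 1) → A) → A) :
    (Fin (m + n + 1) → A) → A := fun a =>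
  ∑ i : Fin (m + 1), ((-1 : ℤ) ^ (n * (i : ℕ))) • circI α i f g a

/-- The graded (Gerstenhaber) bracket `[f,g] = f ∘ g - (-1)^{mn} g ∘ f` on `⊕ V^α_m`. -/
def vbracket {A : Type*} [AddCommGroup A] (α : A → A) {m n : ℕ}
    (f : (Fin (m + 1) → A) → A) (g : (Fin (n + 1) → A) → A) :
    (Fin (m + n + 1) → A) → A := fun a =>
  vcirc α f g a - ((-1 : ℤ) ^ (m * n)) • vcirc α g f (reindex (by omega) a)

/-- The cup product of an `(m+1)`-cochain and an `(n+1)`-cochain. -/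
def cupProd {A : Type*} (μ : A → A → A) (α : A → A) {m n : ℕ}
    (f : (Fin (m + 1) → A) → A) (g : (Fin (n + 1) → A) → A) :
    (Fin (m + n + 2) → A) → A := fun a =>
  μ (α^[n] (f fun i => a ⟨(i : ℕ), by omega⟩))
    (α^[m] (g fun i => a ⟨m + 1 + (i : ℕ), by omega⟩))

/-!
Expanding both associators `(f ∘ g) ∘ h - f ∘ (g ∘ h)` as double sums of `(f ∘ᵢ g) ∘ⱼ h`, the
terms with `i ≤ j ≤ i + n` are exactly the terms of `f ∘ (g ∘ h)` by the second pre-Lie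
identity, so only the terms with `j < i` and `j > i + n` survive. By the first pre-Lie identity
these are, up to the sign `(-1)^{np}`, the surviving terms with `j > i + p` and `j < i` of the
associator of `h` and `g`.
The twist by `α` is harmless: the first identity needs `g` and `h` to commute with `α`, and
pulling `g ∘ h = Σ ± g ∘ₜ h` out of the slot of `f` needs `f` to be multilinear.
-/

open Finset

section SignedSums

variable {A : Type*} [AddCommGroup A]

theorem sum_range_split_band (Z : ℕ → A) {i m : ℕ} (hi : i ≤ m) (n : ℕ) :
    ∑ j ∈ range (m + n + 1), Z j
      = ∑ j ∈ range i, Z j + ∑ t ∈ range (n + 1), Z (i + t)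
        + ∑ j ∈ Ico (i + n + 1) (m + n + 1), Z j := by
  rw [← sum_range_add_sum_Ico Z (show i + (n + 1) ≤ m + n + 1 by omega), sum_range_add,
    add_assoc i]

theorem sum_sum_range_split_band (m n : ℕ) (Z : ℕ → ℕ → A) :
    ∑ j ∈ range (m + n + 1), ∑ i ∈ range (m + 1), Z i j
      = ∑ i ∈ range (m + 1), ∑ j ∈ range i, Z i j
        + ∑ i ∈ range (m + 1), ∑ t ∈ range (n + 1), Z i (i + t)
        + ∑ i ∈ range (m + 1), ∑ j ∈ Ico (i + n + 1) (m + n + 1), Z i j := by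
  rw [sum_comm, ← sum_add_distrib, ← sum_add_distrib]
  exact sum_congr rfl fun i hi =>
    sum_range_split_band _ (Nat.lt_succ_iff.mp (mem_range.mp hi)) n

theorem sum_lower_eq_neg_one_pow_smul_sum_upper (m n p : ℕ) (X Y : ℕ → ℕ → A)
    (hXY : ∀ i j, i ≤ m → j < i → X i j = Y j (i + p)) :
    ∑ i ∈ range (m + 1), ∑ j ∈ range i, (-1 : ℤ) ^ (p * j + n * i) • X i j
      = (-1 : ℤ) ^ (n * p) • ∑ i ∈ range (m + 1), ∑ j ∈ Ico (i + p + 1) (m + p + 1),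
          (-1 : ℤ) ^ (n * j + p * i) • Y i j := by
  rw [sum_comm' (t' := range (m + 1)) (s' := fun j => Ico (j + 1) (m + 1))
    (fun i j => by simp only [mem_range, mem_Ico]; omega), smul_sum]
  refine sum_congr rfl fun j _ => ?_
  rw [show j + p + 1 = j + 1 + p by omega, show m + p + 1 = m + 1 + p by omega,
    ← sum_Ico_add' _ (j + 1) (m + 1) p, smul_sum]
  refine sum_congr rfl fun i hi => ?_
  rw [mem_Ico] at hi
  rw [hXY i j (by omega) (by omega), smul_smul, ← pow_add,
    show n * p + (n * (i + p) + p * j) = (p * j + n * i) + (n * p + n * p) by ring,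
    pow_add (-1 : ℤ) (p * j + n * i), (Even.add_self _).neg_one_pow, mul_one]

theorem sum_band_eq_sum_nested (m n p : ℕ) (X N : ℕ → ℕ → A)
    (hXN : ∀ i t, i ≤ m → t ≤ n → X i (i + t) = N i t) :
    ∑ i ∈ range (m + 1), ∑ t ∈ range (n + 1), (-1 : ℤ) ^ (p * (i + t) + n * i) • X i (i + t)
      = ∑ i ∈ range (m + 1), ∑ t ∈ range (n + 1), (-1 : ℤ) ^ ((n + p) * i + p * t) • N i t := by
  refine sum_congr rfl fun i hi => sum_congr rfl fun t ht => ?_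
  rw [mem_range] at hi ht
  rw [hXN i t (by omega) (by omega), show p * (i + t) + n * i = (n + p) * i + p * t by ring]

/-- `X i j`, `Y i j`, `NX i t`, `NY i t` stand for `(f ∘ᵢ g) ∘ⱼ h`, `(f ∘ᵢ h) ∘ⱼ g`,
`f ∘ᵢ (g ∘ₜ h)`, `f ∘ᵢ (h ∘ₜ g)`; the hypotheses are the axioms of a pre-Lie system. -/
theorem graded_preLie_of_preLie_system (m n p : ℕ) (X Y NX NY : ℕ → ℕ → A)
    (hX : ∀ i j, i ≤ m → j < i → X i j = Y j (i + p))
    (hY : ∀ i j, i ≤ m → j < i → Y i j = X j (i + n))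
    (hNX : ∀ i t, i ≤ m → t ≤ n → X i (i + t) = NX i t)
    (hNY : ∀ i t, i ≤ m → t ≤ p → Y i (i + t) = NY i t) :
    (∑ j ∈ range (m + n + 1), ∑ i ∈ range (m + 1), (-1 : ℤ) ^ (p * j + n * i) • X i j)
        - ∑ i ∈ range (m + 1), ∑ t ∈ range (n + 1), (-1 : ℤ) ^ ((n + p) * i + p * t) • NX i t
      = (-1 : ℤ) ^ (n * p) •
          ((∑ j ∈ range (m + p + 1), ∑ i ∈ range (m + 1), (-1 : ℤ) ^ (n * j + p * i) • Y i j)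
            - ∑ i ∈ range (m + 1), ∑ t ∈ range (p + 1),
                (-1 : ℤ) ^ ((p + n) * i + n * t) • NY i t) := by
  have hsq : (-1 : ℤ) ^ (n * p) * (-1) ^ (n * p) = 1 := by
    rw [← pow_add, (Even.add_self _).neg_one_pow]
  rw [sum_sum_range_split_band, sum_sum_range_split_band,
    sum_band_eq_sum_nested m n p X NX hNX, sum_band_eq_sum_nested m p n Y NY hNY,
    sum_lower_eq_neg_one_pow_smul_sum_upper m n p X Y hX,
    sum_lower_eq_neg_one_pow_smul_sum_upper m p n Y X hY, mul_comm p n,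
    smul_sub, smul_add, smul_add, smul_smul, hsq, one_smul]
  abel

end SignedSums

theorem IsCompat.iterate_apply {A : Type*} {α : A → A} {n : ℕ} {f : (Fin n → A) → A}
    (hf : IsCompat α f) (k : ℕ) (a : Fin n → A) :
    α^[k] (f a) = f fun i => α^[k] (a i) := by
  induction k generalizing a with
  | zero => rfl
  | succ k ih =>
    rw [Function.iterate_succ_apply', ih, hf]
    simp only [Function.iterate_succ_apply']

section Insertion

variable {A : Type*} (α : A → A) {m n p : ℕ}
  (f : (Fin (m + 1) → A) → A) (g : (Fin (n + 1) → A) → A) (h : (Fin (p + 1) → A) → A)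

theorem circI_circI_of_le (i t : ℕ) (hi : i ≤ m) (ht : t ≤ n) (a : Fin (m + n + p + 1) → A) :
    circI α ⟨i + t, by omega⟩ (circI α ⟨i, by omega⟩ f g) h a
      = circI α ⟨i, by omega⟩ f (circI α ⟨t, by omega⟩ g h) (reindex (by omega) a) := by
  simp only [circI, reindex, Fin.cast]
  congr 1
  funext k
  split_ifs <;> try omega
  · rw [← Function.iterate_add_apply]
  · congr 1
    funext l
    split_ifs <;> first | omega | simp only [add_assoc]
  · simp only [← Function.iterate_add_apply, add_assoc]

theorem circI_circI_of_lt (hg : IsCompat α g) (hh : IsCompat α h)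
    (i j : ℕ) (hi : i ≤ m) (hj : j < i) (a : Fin (m + n + p + 1) → A) :
    circI α ⟨j, by omega⟩ (circI α ⟨i, by omega⟩ f g) h a
      = circI α ⟨i + p, by omega⟩ (circI α ⟨j, by omega⟩ f h) g (reindex (by omega) a) := by
  simp only [circI, reindex, Fin.cast]
  congr 1
  funext k
  split_ifs <;> try omega
  · exact Function.Commute.iterate_iterate_self α n p _
  · rw [hh.iterate_apply n]
    congr 1
    funext l
    split_ifs <;> first | omega | rfl
  · exact Function.Commute.iterate_iterate_self α n p _
  · rw [hg.iterate_apply p]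
    congr 1
    funext l
    split_ifs <;> first | omega | simp only [add_right_comm]
  · rw [Function.Commute.iterate_iterate_self α n p]
    simp only [add_right_comm]

end Insertion

theorem Fin.sum_univ_eq_sum_range_clamp {M : Type*} [AddCommMonoid M] {N : ℕ}
    (F : Fin (N + 1) → M) : ∑ i, F i = ∑ i ∈ range (N + 1), F (Fin.clamp i N) := by
  rw [← Fin.sum_univ_eq_sum_range]
  refine sum_congr rfl fun i _ => congrArg F (Fin.ext ?_)
  simp [Fin.clamp, Nat.le_of_lt_succ i.2]

theorem Fin.clamp_eq_mk {n m : ℕ} (h : n ≤ m) : Fin.clamp n m = ⟨n, Nat.lt_succ_of_le h⟩ :=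
  Fin.ext (min_eq_left h)

section Expansion

variable {A : Type*} [AddCommGroup A] (α : A → A) {m n p : ℕ}

theorem circI_eq_update {R : Type*} [Semiring R] [Module R A]
    (f : MultilinearMap R (fun _ : Fin (m + 1) => A) A) (i : Fin (m + 1))
    (G : (Fin (n + 1) → A) → A) (a : Fin (m + n + 1) → A) :
    circI α i f G a = f (Function.update (fun k : Fin (m + 1) =>
      if (k : ℕ) < i then α^[n] (a ⟨k, by omega⟩) else α^[n] (a ⟨k + n, by omega⟩)) i
        (G fun l => a ⟨i + l, by omega⟩)) := by
  simp only [circI]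
  congr 1
  funext k
  rcases eq_or_ne k i with rfl | hk
  · simp
  · simp [hk, Fin.val_ne_of_ne hk]

theorem circI_sum_smul_right {R : Type*} [Semiring R] [Module R A]
    (f : MultilinearMap R (fun _ : Fin (m + 1) => A) A) (i : Fin (m + 1))
    {ι : Type*} (s : Finset ι) (c : ι → ℤ) (G : ι → (Fin (n + 1) → A) → A)
    (a : Fin (m + n + 1) → A) :
    circI α i f (fun b => ∑ x ∈ s, c x • G x b) a = ∑ x ∈ s, c x • circI α i f (G x) a := by
  classical
  simp only [circI_eq_update, ← MultilinearMap.toLinearMap_apply, map_sum, map_zsmul]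

theorem circI_sum_smul_left {ι : Type*} (s : Finset ι) (c : ι → ℤ)
    (F : ι → (Fin (m + 1) → A) → A) (i : Fin (m + 1)) (G : (Fin (n + 1) → A) → A)
    (a : Fin (m + n + 1) → A) :
    circI α i (fun b => ∑ x ∈ s, c x • F x b) G a = ∑ x ∈ s, c x • circI α i (F x) G a :=
  rfl

theorem vcirc_vcirc_left_eq_sum (f : (Fin (m + 1) → A) → A) (g : (Fin (n + 1) → A) → A)
    (h : (Fin (p + 1) → A) → A) (a : Fin (m + n + p + 1) → A) :
    vcirc α (vcirc α f g) h a
      = ∑ j ∈ range (m + n + 1), ∑ i ∈ range (m + 1), (-1 : ℤ) ^ (p * j + n * i) •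
          circI α (Fin.clamp j (m + n)) (circI α (Fin.clamp i m) f g) h a := by
  unfold vcirc
  rw [Fin.sum_univ_eq_sum_range_clamp]
  refine sum_congr rfl fun j hj => ?_
  rw [circI_sum_smul_left, smul_sum, Fin.sum_univ_eq_sum_range_clamp]
  refine sum_congr rfl fun i hi => ?_
  rw [mem_range] at hi hj
  rw [smul_smul, ← pow_add, Fin.coe_clamp, Fin.coe_clamp, min_eq_left (by omega),
    min_eq_left (by omega)]

theorem vcirc_vcirc_right_eq_sum {R : Type*} [Semiring R] [Module R A]
    (f : MultilinearMap R (fun _ : Fin (m + 1) => A) A) (g : (Fin (n + 1) → A) → A)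
    (h : (Fin (p + 1) → A) → A) (a : Fin (m + (n + p) + 1) → A) :
    vcirc α f (vcirc α g h) a
      = ∑ i ∈ range (m + 1), ∑ t ∈ range (n + 1), (-1 : ℤ) ^ ((n + p) * i + p * t) •
          circI α (Fin.clamp i m) f (circI α (Fin.clamp t n) g h) a := by
  unfold vcirc
  rw [Fin.sum_univ_eq_sum_range_clamp]
  refine sum_congr rfl fun i hi => ?_
  rw [circI_sum_smul_right, smul_sum, Fin.sum_univ_eq_sum_range_clamp]
  refine sum_congr rfl fun t ht => ?_
  rw [mem_range] at hi ht
  rw [smul_smul, ← pow_add, Fin.coe_clamp, Fin.coe_clamp, min_eq_left (by omega),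
    min_eq_left (by omega)]

end Expansion

/-- The α-twisted insertions make `{V^α_m, ∘ᵢ}` a pre-Lie system; consequently
`f ∘ g = Σᵢ (-1)^{ni} f ∘ᵢ g` makes `⊕ V^α_m` a graded pre-Lie algebra:
`(f ∘ g) ∘ h - f ∘ (g ∘ h) = (-1)^{np} [(f ∘ h) ∘ g - f ∘ (h ∘ g)]`. -/
theorem vcirc_graded_preLie
    {K : Type*} [Field K] {A : Type*} [AddCommGroup A] [Module K A]
    (α : A →ₗ[K] A) (m n p : ℕ)
    (f : MultilinearMap K (fun _ : Fin (m + 1) => A) A)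
    (g : MultilinearMap K (fun _ : Fin (n + 1) => A) A)
    (h : MultilinearMap K (fun _ : Fin (p + 1) => A) A)
    (hg : IsCompat (⇑α) (⇑g)) (hh : IsCompat (⇑α) (⇑h)) :
    ∀ a : Fin (m + n + p + 1) → A,
      vcirc (⇑α) (vcirc (⇑α) (⇑f) (⇑g)) (⇑h) a
          - vcirc (⇑α) (⇑f) (vcirc (⇑α) (⇑g) (⇑h)) (reindex (by omega) a)
      = ((-1 : ℤ) ^ (n * p)) •
          (vcirc (⇑α) (vcirc (⇑α) (⇑f) (⇑h)) (⇑g) (reindex (by omega) a)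
            - vcirc (⇑α) (⇑f) (vcirc (⇑α) (⇑h) (⇑g)) (reindex (by omega) a)) := by
  intro a
  rw [vcirc_vcirc_left_eq_sum, vcirc_vcirc_right_eq_sum, vcirc_vcirc_left_eq_sum,
    vcirc_vcirc_right_eq_sum]
  refine graded_preLie_of_preLie_system m n p _ _ _ _ (fun i j hi hj => ?_) (fun i j hi hj => ?_)
    (fun i t hi ht => ?_) (fun i t hi ht => ?_) <;> simp (disch := omega) only [Fin.clamp_eq_mk]
  exacts [circI_circI_of_lt α f g h hg hh i j hi hj a, circI_circI_of_lt α f h g hh hg i j hi hj _,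
    circI_circI_of_le α f g h i t hi ht a, circI_circI_of_le α f h g i t hi ht _]
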